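/- arXiv:1607.00798 — 4 statements merged into one kernel-verified Lean document; each statement's English description precedes it below -/
import Mathlib

section
/- For every integer N divisible by 4 and every integer a coprime to N, the simplex with vertices e_1, e_2, e_3, e_4 and (2, N/2 - 1, a, N/2 - a) in \mathbb{R}^4 is an empty simplex, i.e., its only lattice points are its five vertices. -/
open Set MeasureTheory

noncomputable section

/-- Cast an integer point to a real point. -/
def ratl {d : ℕ} (x : Fin d → ℤ) : Fin d → ℝ := fun i => (x i : ℝ)

/-- A lattice polytope: convex hull of finitely many integer points. -/
def IsLatticePolytope {d : ℕ} (P : Set (Fin d → ℝ)) : Prop :=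
  ∃ V : Finset (Fin d → ℤ), V.Nonempty ∧ P = convexHull ℝ (ratl '' ↑V)

/-- Width of a set with respect to an integer linear functional. -/
def widthF {d : ℕ} (P : Set (Fin d → ℝ)) (l : Fin d → ℤ) : ℝ :=
  sSup ((fun pq : (Fin d → ℝ) × (Fin d → ℝ) =>
    |∑ i, (l i : ℝ) * (pq.1 i - pq.2 i)|) '' (P ×ˢ P))

/-- Lattice width: min over nonzero integer functionals. -/
def latWidth {d : ℕ} (P : Set (Fin d → ℝ)) : ℝ :=
  sInf (Set.range fun l : {l : Fin d → ℤ // l ≠ 0} => widthF P l.1)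

/-- Number of lattice points of a set. -/
def latticeSize {d : ℕ} (P : Set (Fin d → ℝ)) : ℕ :=
  {x : Fin d → ℤ | ratl x ∈ P}.ncard

/-- Integer affine map, acting on real points. -/
def affMap {d : ℕ} (A : Matrix (Fin d) (Fin d) ℤ) (b : Fin d → ℤ) (x : Fin d → ℝ) :
    Fin d → ℝ :=
  (A.map (Int.cast : ℤ → ℝ)).mulVec x + ratl b

/-- Unimodular equivalence of subsets of ℝ^d. -/
def UnimodEquiv {d : ℕ} (P P' : Set (Fin d → ℝ)) : Prop :=
  ∃ (A : Matrix (Fin d) (Fin d) ℤ) (b : Fin d → ℤ), IsUnit A.det ∧ affMap A b '' P = P'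

/-- Projection forgetting the last coordinate. -/
def proj {d : ℕ} (x : Fin (d+1) → ℝ) : Fin d → ℝ := fun i => x i.castSucc

/-- Equivalence of lifts: a unimodular equivalence commuting with the projection. -/
def LiftEquiv {d : ℕ} (P₁ P₂ : Set (Fin (d+1) → ℝ)) : Prop :=
  ∃ (A : Matrix (Fin (d+1)) (Fin (d+1)) ℤ) (b : Fin (d+1) → ℤ), IsUnit A.det ∧
    affMap A b '' P₁ = P₂ ∧ ∀ x ∈ P₁, proj (affMap A b x) = proj x

/-!
Write `N = 2m` and `v = (2, m - 1, a, m - a)`, so that `∑ vᵢ = N + 1`. A point `x` of the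
simplex has barycentric coordinate `k / N` at `v`, where the height `k` is `∑ xᵢ - 1`, and
`sᵢ / N` at `eᵢ`, where `sᵢ = N xᵢ - k vᵢ`. A lattice point other than a vertex therefore gives
an integer `0 < k < N` with all `sᵢ ≥ 0` and `∑ sᵢ = N - k`. Since `s₃ + s₄ ≡ -k m (mod 2m)`:
* if `k` is even, `s₃ + s₄ ∈ [0, N)` is `0`, so `s₃ = 0`, i.e. `N ∣ a k`, and `N ∣ k` as `a` is
  coprime to `N`;
* if `k` is odd, `s₃ + s₄ = m`, so `k < m` (as `m` is even, `k ≠ m`), and then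
  `s₂ + m - k ≡ 0 (mod 2m)` lies strictly between `0` and `2m`.
-/

section LatticeSimplex

variable {d : ℕ}

lemma le_dotProduct_of_mem_convexHull {S : Set (Fin d → ℤ)} {c x : Fin d → ℤ} {r : ℤ}
    (hS : ∀ y ∈ S, r ≤ c ⬝ᵥ y) (hx : ratl x ∈ convexHull ℝ (ratl '' S)) : r ≤ c ⬝ᵥ x := by
  have cast_dotProduct (y : Fin d → ℤ) : ((c ⬝ᵥ y : ℤ) : ℝ) = ratl c ⬝ᵥ ratl y := by
    simp [dotProduct, ratl]
  have hlin : IsLinearMap ℝ (ratl c ⬝ᵥ · : (Fin d → ℝ) → ℝ) :=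
    ⟨dotProduct_add _, fun t y => dotProduct_smul t _ _⟩
  have hhull : ratl x ∈ {w | (r : ℝ) ≤ ratl c ⬝ᵥ w} := by
    refine convexHull_min ?_ (convex_halfSpace_ge hlin r) hx
    rintro _ ⟨y, hy, rfl⟩
    simpa [← cast_dotProduct] using hS y hy
  simpa [← cast_dotProduct] using hhull

lemma exists_eq_single_of_nonneg_of_sum_eq_one {ι : Type*} [Fintype ι] [DecidableEq ι]
    {x : ι → ℤ} (hx : ∀ i, 0 ≤ x i) (hsum : ∑ i, x i = 1) : ∃ j, x = Pi.single j 1 := by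
  obtain ⟨j, -, hj⟩ := Finset.exists_ne_zero_of_sum_ne_zero (hsum.trans_ne one_ne_zero)
  have hsplit := Finset.add_sum_erase Finset.univ x (Finset.mem_univ j)
  have hrest : ∑ i ∈ Finset.univ.erase j, x i = 0 :=
    le_antisymm (by have := (hx j).lt_of_ne' hj; omega)
      (Finset.sum_nonneg fun i _ => hx i)
  have hzero := (Finset.sum_eq_zero_iff_of_nonneg fun i _ => hx i).1 hrest
  refine ⟨j, funext fun i => ?_⟩
  rcases eq_or_ne i j with rfl | hij
  · simp only [Pi.single_eq_same]; omega
  · simpa [hij] using hzero i (by simp [hij])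

def basisSimplexVertices (v : Fin d → ℤ) : Set (Fin d → ℤ) :=
  insert v (range fun i => Pi.single i 1)

lemma barycentric_nonneg_of_mem_convexHull {v x : Fin d → ℤ} (hN : 0 ≤ ∑ i, v i - 1)
    (hx : ratl x ∈ convexHull ℝ (ratl '' basisSimplexVertices v)) :
    0 ≤ ∑ i, x i - 1 ∧ ∀ i, (∑ j, x j - 1) * v i ≤ (∑ j, v j - 1) * x i := by
  constructor
  · have key := le_dotProduct_of_mem_convexHull (c := 1) (r := 1) ?_ hx
    · rw [one_dotProduct] at key; omega
    · rintro y (rfl | ⟨j, rfl⟩) <;> simp only [one_dotProduct]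
      · omega
      · simp
  · intro i
    set c := (∑ j, v j - 1) • Pi.single i 1 - v i • (1 : Fin d → ℤ)
    have hc (y : Fin d → ℤ) : c ⬝ᵥ y = (∑ j, v j - 1) * y i - v i * ∑ j, y j := by
      simp only [c, sub_dotProduct, smul_dotProduct, single_dotProduct, one_dotProduct, smul_eq_mul,
        one_mul]
    have key := le_dotProduct_of_mem_convexHull (c := c) (r := -v i) ?_ hx
    · rw [hc] at key; linarith
    · rintro y (rfl | ⟨j, rfl⟩) <;> rw [hc]
      · linarith
      · rcases eq_or_ne j i with rfl | hji
        · simp only [Pi.single_eq_same, mul_one, Finset.sum_pi_single', Finset.mem_univ, ↓reduceIte]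
          omega
        · simp [hji]

lemma mem_basisSimplexVertices_or_of_mem_convexHull {v x : Fin d → ℤ} (hN : 0 < ∑ i, v i - 1)
    (hx : ratl x ∈ convexHull ℝ (ratl '' basisSimplexVertices v)) :
    x ∈ basisSimplexVertices v ∨ (0 < ∑ i, x i - 1 ∧ ∑ i, x i - 1 < ∑ i, v i - 1 ∧
      ∀ i, (∑ j, x j - 1) * v i ≤ (∑ j, v j - 1) * x i) := by
  obtain ⟨hk, hbary⟩ := barycentric_nonneg_of_mem_convexHull hN.le hx
  set N := ∑ i, v i - 1 with hNdef
  set k := ∑ i, x i - 1 with hkdef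
  have hsum : ∑ i, (N * x i - k * v i) = N - k := by
    rw [Finset.sum_sub_distrib, ← Finset.mul_sum, ← Finset.mul_sum]
    linear_combination N * hkdef - k * hNdef
  have hcoord_nonneg (i : Fin d) : 0 ≤ N * x i - k * v i := by linarith [hbary i]
  rcases hk.eq_or_lt with hk0 | hkpos
  · obtain ⟨j, rfl⟩ : ∃ j, x = Pi.single j 1 := by
      refine exists_eq_single_of_nonneg_of_sum_eq_one (fun i => ?_) (by omega)
      exact nonneg_of_mul_nonneg_right (by simpa [← hk0] using hbary i) hN
    exact Or.inl (Or.inr ⟨j, rfl⟩)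
  have hkN : k ≤ N := by
    linarith [Finset.sum_nonneg fun i (_ : i ∈ Finset.univ) => hcoord_nonneg i]
  rcases hkN.eq_or_lt with hkN | hkN
  · refine Or.inl (Or.inl (funext fun i => ?_))
    have hzero := (Finset.sum_eq_zero_iff_of_nonneg fun i _ => hcoord_nonneg i).1
      (by rw [hsum, hkN, sub_self]) i (Finset.mem_univ i)
    rw [hkN, ← mul_sub] at hzero
    linarith [(mul_eq_zero.1 hzero).resolve_left hN.ne']
  · exact Or.inr ⟨hkpos, hkN, hbary⟩

end LatticeSimplex

lemma basisSimplexVertices_fin_four (v : Fin 4 → ℤ) :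
    basisSimplexVertices v = {![1,0,0,0], ![0,1,0,0], ![0,0,1,0], ![0,0,0,1], v} := by
  have hbasis : (fun i : Fin 4 => (Pi.single i 1 : Fin 4 → ℤ)) =
      ![![1,0,0,0], ![0,1,0,0], ![0,0,1,0], ![0,0,0,1]] := by
    ext i j; fin_cases i <;> fin_cases j <;> rfl
  ext y
  simp [basisSimplexVertices, hbasis, Matrix.range_cons, or_comm, or_left_comm]

section Family

variable {m a k : ℤ} {x : Fin 4 → ℤ}

lemma false_of_even_height (hcop : IsCoprime a (2 * m)) (hk0 : 0 < k) (hkN : k < 2 * m)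
    (hk : Even k) (hsum : x 0 + x 1 + x 2 + x 3 = k + 1)
    (h0 : k * 2 ≤ 2 * m * x 0) (h1 : k * (m - 1) ≤ 2 * m * x 1)
    (h2 : k * a ≤ 2 * m * x 2) (h3 : k * (m - a) ≤ 2 * m * x 3) : False := by
  obtain ⟨j, rfl⟩ := hk
  have htail : 2 * m * (x 2 + x 3 - j) = 0 := by
    refine Int.eq_zero_of_dvd_of_nonneg_of_lt ?_ ?_ (dvd_mul_right _ _) <;> nlinarith
  have hdvd : 2 * m ∣ a * (j + j) := ⟨x 2, by nlinarith⟩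
  have := Int.eq_zero_of_dvd_of_nonneg_of_lt hk0.le hkN (hcop.symm.dvd_of_dvd_mul_left hdvd)
  omega

lemma false_of_odd_height (hm : Even m) (hk0 : 0 < k) (hkN : k < 2 * m)
    (hk : Odd k) (hsum : x 0 + x 1 + x 2 + x 3 = k + 1)
    (h0 : k * 2 ≤ 2 * m * x 0) (h1 : k * (m - 1) ≤ 2 * m * x 1)
    (h2 : k * a ≤ 2 * m * x 2) (h3 : k * (m - a) ≤ 2 * m * x 3) : False := by
  obtain ⟨j, rfl⟩ := hk
  have htail : 2 * m * (x 2 + x 3 - j - 1) = 0 := by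
    refine Int.eq_zero_of_abs_lt_dvd (dvd_mul_right _ _) ?_
    rw [abs_lt]; constructor <;> nlinarith
  have hhead : (2 * m * x 0 - (2 * j + 1) * 2) + (2 * m * x 1 - (2 * j + 1) * (m - 1)) =
      m - (2 * j + 1) := by
    linear_combination (2 * m) * hsum - htail
  have hkm : 2 * j + 1 < m := by
    obtain ⟨l, rfl⟩ := hm
    omega
  have hshift : 2 * m * (x 1 - j) =
      (2 * m * x 1 - (2 * j + 1) * (m - 1)) + (m - (2 * j + 1)) := by
    ring
  have := Int.eq_zero_of_dvd_of_nonneg_of_lt (n := 2 * m) (by linarith) (by linarith)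
    (dvd_mul_right _ (x 1 - j))
  linarith

lemma false_of_scaled_barycentric (hm : Even m) (hcop : IsCoprime a (2 * m))
    (hk0 : 0 < ∑ i, x i - 1) (hkN : ∑ i, x i - 1 < 2 * m)
    (hbary : ∀ i, (∑ j, x j - 1) * ![2, m - 1, a, m - a] i ≤ 2 * m * x i) : False := by
  have hsum : x 0 + x 1 + x 2 + x 3 = (∑ i, x i - 1) + 1 := by
    rw [Fin.sum_univ_four]; ring
  rcases Int.even_or_odd (∑ i, x i - 1) with hk | hk
  · exact false_of_even_height hcop hk0 hkN hk hsum (hbary 0) (hbary 1) (hbary 2) (hbary 3)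
  · exact false_of_odd_height hm hk0 hkN hk hsum (hbary 0) (hbary 1) (hbary 2) (hbary 3)

end Family

/-- The empty 4-simplices of non-prime determinant N ≡ 0 (mod 4): the simplex with
vertices e₁, e₂, e₃, e₄ and (2, N/2 - 1, a, N/2 - a) has no lattice points other than
its five vertices. -/
theorem family_mod4_empty (N a : ℤ) (hN4 : (4 : ℤ) ∣ N) (hNpos : 0 < N)
    (hcop : IsCoprime a N) (x : Fin 4 → ℤ)
    (hx : ratl x ∈ convexHull ℝ (ratl ''
      ({![1,0,0,0], ![0,1,0,0], ![0,0,1,0], ![0,0,0,1], ![2, N/2 - 1, a, N/2 - a]} :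
        Set (Fin 4 → ℤ)))) :
    x ∈ ({![1,0,0,0], ![0,1,0,0], ![0,0,1,0], ![0,0,0,1], ![2, N/2 - 1, a, N/2 - a]} :
        Set (Fin 4 → ℤ)) := by
  obtain ⟨m, rfl⟩ : ∃ m, N = 2 * m := ⟨N / 2, by omega⟩
  rw [show 2 * m / 2 = m by omega, ← basisSimplexVertices_fin_four] at hx ⊢
  have hdet : ∑ i, ![2, m - 1, a, m - a] i - 1 = 2 * m := by
    simp only [Fin.sum_univ_four, Matrix.cons_val_zero, Matrix.cons_val_one, Matrix.cons_val]
    ring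
  rcases mem_basisSimplexVertices_or_of_mem_convexHull (hdet ▸ hNpos) hx with
    hmem | ⟨hk0, hkN, hbary⟩
  · exact hmem
  · rw [hdet] at hkN hbary
    exact (false_of_scaled_barycentric (even_iff_two_dvd.2 (by omega)) hcop hk0 hkN hbary).elim
end
end

section
/- For each lattice dimension d and size n, the threshold width is monotone in n: w^\infty(d,n) \le w^\infty(d,n+1). Concretely: if for some W there are infinitely many pairwise non-equivalent lattice d-polytopes of size n and width exactly W, then there are infinitely many pairwise non-equivalent lattice d-polytopes of size n+1 and width exactly W. -/
open Set MeasureTheory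

noncomputable section

/-!
For `d ≥ 2`, let `l` be a functional realising the lattice width of `P`. Since `l` has a nonzero
integer kernel vector, the slab `{min_P l ≤ l ≤ max_P l}` contains lattice points outside `P`;
stack onto `P` one of them, `z`, for which `conv (P ∪ {z})` has as few lattice points as possible.
Then `z` is its only new lattice point (any other one, `y`, would give a smaller `conv (P ∪ {y})`
missing `z`), and the width along `l`, hence the lattice width, does not change. A stacked
polytope contains its base, so the base is equivalent to one of the finitely many polytopes spanned
by lattice points of any polytope equivalent to the stacked one: each class of stacked polytopes
comes from finitely many members of the family, and infinitely many classes remain.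

For `d ≤ 1` the hypothesis fails: every lattice polytope of size `n` is equivalent to a subset of
`[0, n]^d`, so there are only finitely many of them up to equivalence.
-/

open Topology
open scoped Matrix

theorem Set.Infinite.exists_pairwise_not_rel {α β : Type*} {S : Set α} (hS : S.Infinite)
    {r : β → β → Prop} (hr : Equivalence r) (f : α → β)
    (hfib : ∀ a ∈ S, {a' ∈ S | r (f a') (f a)}.Finite) :
    ∃ T ⊆ f '' S, T.Infinite ∧ T.Pairwise fun x y => ¬r x y := by
  let π : α → Quotient ⟨r, hr⟩ := fun a => Quotient.mk _ (f a)
  have hπ : (π '' S).Infinite := fun hfin => hS <| Set.Finite.of_finite_fibers π hfin <| by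
    rintro _ ⟨a, ha, rfl⟩
    exact (hfib a ha).subset fun a' ⟨ha', h⟩ => ⟨ha', Quotient.exact h⟩
  obtain ⟨S', hS'S, hinj, himg⟩ := (surjOn_image π S).exists_subset_injOn_image_eq
  refine ⟨f '' S', image_mono hS'S, ?_, ?_⟩
  · rw [← himg, ← image_image] at hπ
    exact hπ.of_image _
  · rintro _ ⟨a, ha, rfl⟩ _ ⟨b, hb, rfl⟩ hne hab
    exact hne (congrArg f (hinj ha hb (Quotient.sound hab)))

theorem exists_isLeast_range_of_natCast {ι : Type*} [Nonempty ι] (f : ι → ℝ)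
    (hf : ∀ i, ∃ k : ℕ, f i = k) : ∃ i, IsLeast (range f) (f i) := by
  choose k hk using hf
  obtain ⟨i, hi⟩ := ciInf_mem k
  refine ⟨i, ⟨i, rfl⟩, ?_⟩
  rintro _ ⟨j, rfl⟩
  rw [hk, hk, Nat.cast_le, hi]
  exact ciInf_le (OrderBot.bddBelow _) j

theorem Convex.mem_or_eq_of_mem_convexJoin {𝕜 E : Type*} [Field 𝕜] [LinearOrder 𝕜]
    [IsStrictOrderedRing 𝕜] [AddCommGroup E] [Module 𝕜 E] {s : Set E} (hs : Convex 𝕜 s)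
    {x y : E} (hx : x ∈ convexJoin 𝕜 {y} s) (hy : y ∈ convexJoin 𝕜 {x} s) : x ∈ s ∨ x = y := by
  rw [convexJoin_singleton_left, mem_iUnion₂] at hx hy
  obtain ⟨p, hp, a, b, ha, hb, hab, hx⟩ := hx
  obtain ⟨q, hq, c, e, hc, he, hce, hy⟩ := hy
  by_cases hac : a * c = 1
  · have ha1 : a = 1 := by nlinarith
    right
    rw [← hx, ha1, show b = 0 by linarith, one_smul, zero_smul, add_zero]
  · left
    have hpos : 0 < 1 - a * c := sub_pos.2 (lt_of_le_of_ne (by nlinarith) hac)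
    have hcomb : (1 - a * c) • x = (a * e) • q + b • p := by
      rw [sub_smul, one_smul]
      nth_rewrite 1 [← hx]
      rw [← hy]
      module
    have hx' : x = (a * e / (1 - a * c)) • q + (b / (1 - a * c)) • p := by
      calc x = (1 - a * c)⁻¹ • ((1 - a * c) • x) := by
            rw [smul_smul, inv_mul_cancel₀ hpos.ne', one_smul]
        _ = _ := by
            rw [hcomb]
            module
    rw [hx']
    refine hs hq hp (by positivity) (by positivity) ?_
    field_simp
    linear_combination a * hce + hab

section LatticePolytope

variable {d : ℕ}

def latticePoints (P : Set (Fin d → ℝ)) : Set (Fin d → ℤ) := ratl ⁻¹' P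

theorem latticeSize_eq_ncard (P : Set (Fin d → ℝ)) :
    latticeSize P = (latticePoints P).ncard := rfl

theorem ratl_injective : Function.Injective (ratl (d := d)) :=
  fun _ _ h => funext fun i => Int.cast_injective (congrFun h i)

theorem isClosedEmbedding_ratl : IsClosedEmbedding (ratl (d := d)) :=
  IsClosedEmbedding.piMap fun _ => Int.isClosedEmbedding_coe_real

theorem IsCompact.finite_latticePoints {P : Set (Fin d → ℝ)} (hP : IsCompact P) :
    (latticePoints P).Finite :=
  (isClosedEmbedding_ratl.isCompact_preimage hP).finite_of_discrete

namespace IsLatticePolytope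

variable {P : Set (Fin d → ℝ)}

theorem convex (hP : IsLatticePolytope P) : Convex ℝ P := by
  obtain ⟨V, -, rfl⟩ := hP
  exact convex_convexHull ℝ _

theorem isCompact (hP : IsLatticePolytope P) : IsCompact P := by
  obtain ⟨V, -, rfl⟩ := hP
  exact (V.finite_toSet.image ratl).isCompact_convexHull (𝕜 := ℝ)

theorem nonempty (hP : IsLatticePolytope P) : P.Nonempty := by
  obtain ⟨V, hV, rfl⟩ := hP
  exact (hV.to_set.image ratl).convexHull

theorem finite_latticePoints (hP : IsLatticePolytope P) : (latticePoints P).Finite :=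
  hP.isCompact.finite_latticePoints

theorem eq_convexHull_latticePoints (hP : IsLatticePolytope P) :
    P = convexHull ℝ (ratl '' latticePoints P) := by
  refine subset_antisymm ?_ (convexHull_min (image_preimage_subset _ _) hP.convex)
  obtain ⟨V, -, hV⟩ := hP
  conv_lhs => rw [hV]
  exact convexHull_mono (image_mono fun v hv => hV ▸ subset_convexHull ℝ _ ⟨v, hv, rfl⟩)

theorem exists_latticePoint_min_max (hP : IsLatticePolytope P) (f : (Fin d → ℝ) →ₗ[ℝ] ℝ) :
    ∃ a b : Fin d → ℤ, ratl a ∈ P ∧ ratl b ∈ P ∧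
      ∀ x ∈ P, f (ratl a) ≤ f x ∧ f x ≤ f (ratl b) := by
  obtain ⟨V, hV, rfl⟩ := hP
  obtain ⟨a, ha, hamin⟩ := V.exists_min_image (fun v => f (ratl v)) hV
  obtain ⟨b, hb, hbmax⟩ := V.exists_max_image (fun v => f (ratl v)) hV
  refine ⟨a, b, subset_convexHull ℝ _ ⟨a, ha, rfl⟩, subset_convexHull ℝ _ ⟨b, hb, rfl⟩,
    fun x hx => ⟨?_, ?_⟩⟩
  · refine convexHull_min ?_ (convex_halfSpace_ge f.isLinear _) hx
    rintro _ ⟨v, hv, rfl⟩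
    exact hamin v hv
  · refine convexHull_min ?_ (convex_halfSpace_le f.isLinear _) hx
    rintro _ ⟨v, hv, rfl⟩
    exact hbmax v hv

theorem convexJoin_singleton (hP : IsLatticePolytope P) (z : Fin d → ℤ) :
    IsLatticePolytope (convexJoin ℝ {ratl z} P) := by
  obtain ⟨V, hV, rfl⟩ := hP
  refine ⟨insert z V, Finset.insert_nonempty _ _, ?_⟩
  rw [Finset.coe_insert, image_insert_eq, convexHull_insert (hV.to_set.image ratl)]

end IsLatticePolytope

end LatticePolytope

section UnimodularEquivalence

variable {d : ℕ}

theorem ratl_add (x y : Fin d → ℤ) : ratl (x + y) = ratl x + ratl y := by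
  ext i
  simp [ratl]

theorem ratl_mulVec (A : Matrix (Fin d) (Fin d) ℤ) (x : Fin d → ℤ) :
    ratl (A *ᵥ x) = A.map (Int.cast : ℤ → ℝ) *ᵥ ratl x := by
  ext i
  simp [ratl, Matrix.mulVec, dotProduct]

theorem affMap_ratl (A : Matrix (Fin d) (Fin d) ℤ) (b x : Fin d → ℤ) :
    affMap A b (ratl x) = ratl (A *ᵥ x + b) := by
  rw [affMap, ratl_add, ratl_mulVec]

theorem affMap_affMap (A₂ A₁ : Matrix (Fin d) (Fin d) ℤ) (b₂ b₁ : Fin d → ℤ) (x : Fin d → ℝ) :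
    affMap A₂ b₂ (affMap A₁ b₁ x) = affMap (A₂ * A₁) (A₂ *ᵥ b₁ + b₂) x := by
  simp only [affMap, Matrix.mulVec_add, ratl_add, ratl_mulVec, Matrix.map_mul_intCast,
    Matrix.mulVec_mulVec]
  abel

theorem affMap_one_zero : affMap (1 : Matrix (Fin d) (Fin d) ℤ) 0 = id := by
  ext x i
  simp [affMap, ratl]

theorem image_affMap_convexHull (A : Matrix (Fin d) (Fin d) ℤ) (b : Fin d → ℤ)
    (s : Set (Fin d → ℝ)) :
    affMap A b '' convexHull ℝ s = convexHull ℝ (affMap A b '' s) :=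
  ((A.map (Int.cast : ℤ → ℝ)).mulVecLin.toAffineMap +
    AffineMap.const ℝ (Fin d → ℝ) (ratl b)).image_convexHull s

namespace UnimodEquiv

variable {P Q R : Set (Fin d → ℝ)}

theorem refl (P : Set (Fin d → ℝ)) : UnimodEquiv P P :=
  ⟨1, 0, by simp, by rw [affMap_one_zero, image_id]⟩

theorem symm (h : UnimodEquiv P Q) : UnimodEquiv Q P := by
  obtain ⟨A, b, hA, rfl⟩ := h
  refine ⟨A⁻¹, -(A⁻¹ *ᵥ b), A.isUnit_nonsing_inv_det hA, ?_⟩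
  rw [image_image]
  simp_rw [affMap_affMap, Matrix.nonsing_inv_mul A hA, add_neg_cancel, affMap_one_zero]
  exact image_id P

theorem trans (h₁ : UnimodEquiv P Q) (h₂ : UnimodEquiv Q R) : UnimodEquiv P R := by
  obtain ⟨A, b, hA, rfl⟩ := h₁
  obtain ⟨A', b', hA', rfl⟩ := h₂
  refine ⟨A' * A, A' *ᵥ b + b', by rw [Matrix.det_mul]; exact hA'.mul hA, ?_⟩
  rw [image_image]
  simp_rw [affMap_affMap]

theorem equivalence : Equivalence (UnimodEquiv (d := d)) :=
  ⟨refl, symm, trans⟩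

theorem isLatticePolytope (h : UnimodEquiv P Q) (hP : IsLatticePolytope P) :
    IsLatticePolytope Q := by
  obtain ⟨A, b, -, rfl⟩ := h
  obtain ⟨V, hV, rfl⟩ := hP
  refine ⟨V.image fun x => A *ᵥ x + b, hV.image _, ?_⟩
  rw [image_affMap_convexHull, Finset.coe_image, image_image, image_image]
  simp_rw [affMap_ratl]

theorem exists_subset_of_subset {Q₀ : Set (Fin d → ℝ)} (h : UnimodEquiv Q Q₀) (hPQ : P ⊆ Q) :
    ∃ P' ⊆ Q₀, UnimodEquiv P P' := by
  obtain ⟨A, b, hA, rfl⟩ := h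
  exact ⟨affMap A b '' P, image_mono hPQ, A, b, hA, rfl⟩

end UnimodEquiv

end UnimodularEquivalence

theorem finite_of_pairwise_not_unimodEquiv {d : ℕ} {S : Set (Set (Fin d → ℝ))}
    (hS : ∀ P ∈ S, IsLatticePolytope P) (hpair : S.Pairwise fun P P' => ¬UnimodEquiv P P')
    {Q₀ : Set (Fin d → ℝ)} (hQ₀ : (latticePoints Q₀).Finite) :
    {P ∈ S | ∃ P' ⊆ Q₀, UnimodEquiv P P'}.Finite := by
  choose! P' hP'Q₀ hPP' using fun P (hP : P ∈ {P ∈ S | ∃ P' ⊆ Q₀, UnimodEquiv P P'}) => hP.2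
  refine Set.Finite.of_finite_image (f := fun P => latticePoints (P' P))
    (hQ₀.finite_subsets.subset ?_) ?_
  · rintro _ ⟨P, hP, rfl⟩
    exact preimage_mono (hP'Q₀ P hP)
  · intro P₁ h₁ P₂ h₂ hlatt
    have hP'₁ := (hPP' P₁ h₁).isLatticePolytope (hS P₁ h₁.1)
    have hP'₂ := (hPP' P₂ h₂).isLatticePolytope (hS P₂ h₂.1)
    have heq : P' P₁ = P' P₂ := by
      rw [hP'₁.eq_convexHull_latticePoints, hP'₂.eq_convexHull_latticePoints]
      exact congrArg _ (congrArg _ hlatt)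
    by_contra hne
    exact hpair h₁.1 h₂.1 hne ((hPP' P₁ h₁).trans (heq ▸ (hPP' P₂ h₂).symm))

section Width

variable {d : ℕ}

def intFunctional (l : Fin d → ℤ) : (Fin d → ℝ) →ₗ[ℝ] ℝ :=
  dotProductBilin ℝ ℝ (ratl l)

theorem intFunctional_apply (l : Fin d → ℤ) (x : Fin d → ℝ) :
    intFunctional l x = ratl l ⬝ᵥ x := rfl

theorem intFunctional_ratl (l x : Fin d → ℤ) :
    intFunctional l (ratl x) = ((l ⬝ᵥ x : ℤ) : ℝ) := by
  simp [intFunctional_apply, ratl, dotProduct]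

theorem widthF_eq_sSup (P : Set (Fin d → ℝ)) (l : Fin d → ℤ) :
    widthF P l = sSup ((fun pq : (Fin d → ℝ) × (Fin d → ℝ) =>
      |intFunctional l pq.1 - intFunctional l pq.2|) '' P ×ˢ P) := by
  simp_rw [intFunctional_apply, ← dotProduct_sub]
  rfl

theorem nonempty_ne_zero (hd : 0 < d) : Nonempty {l : Fin d → ℤ // l ≠ 0} :=
  have : Nonempty (Fin d) := ⟨⟨0, hd⟩⟩
  nonempty_subtype.2 (exists_ne 0)

theorem widthF_nonneg (P : Set (Fin d → ℝ)) (l : Fin d → ℤ) : 0 ≤ widthF P l := by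
  rw [widthF_eq_sSup]
  exact Real.sSup_nonneg fun _ ⟨_, _, h⟩ => h ▸ abs_nonneg _

theorem widthF_eq_sub {P : Set (Fin d → ℝ)} {l : Fin d → ℤ} {a b : Fin d → ℝ}
    (ha : a ∈ P) (hb : b ∈ P)
    (hab : ∀ x ∈ P, intFunctional l a ≤ intFunctional l x ∧ intFunctional l x ≤ intFunctional l b) :
    widthF P l = intFunctional l b - intFunctional l a := by
  have hle : ∀ p ∈ P, ∀ q ∈ P, |intFunctional l p - intFunctional l q| ≤
      intFunctional l b - intFunctional l a := fun p hp q hq => by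
    rw [abs_le]
    constructor <;> linarith [hab p hp, hab q hq]
  rw [widthF_eq_sSup]
  refine le_antisymm (csSup_le ⟨_, (a, a), mk_mem_prod ha ha, rfl⟩ ?_) (le_csSup ?_ ?_)
  · rintro _ ⟨⟨p, q⟩, ⟨hp, hq⟩, rfl⟩
    exact hle p hp q hq
  · refine ⟨intFunctional l b - intFunctional l a, ?_⟩
    rintro _ ⟨⟨p, q⟩, ⟨hp, hq⟩, rfl⟩
    exact hle p hp q hq
  · exact ⟨(b, a), mk_mem_prod hb ha, abs_of_nonneg (sub_nonneg.2 (hab a ha).2)⟩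

theorem widthF_mono {P Q : Set (Fin d → ℝ)} (hPQ : P ⊆ Q) (hP : P.Nonempty) (hQ : IsCompact Q)
    (l : Fin d → ℤ) : widthF P l ≤ widthF Q l := by
  rw [widthF_eq_sSup, widthF_eq_sSup]
  obtain ⟨p, hp⟩ := hP
  refine csSup_le_csSup ((hQ.prod hQ).image (by fun_prop)).bddAbove
    ⟨_, (p, p), mk_mem_prod hp hp, rfl⟩ (image_mono (prod_mono hPQ hPQ))

theorem IsLatticePolytope.exists_widthF_eq_natCast {P : Set (Fin d → ℝ)}
    (hP : IsLatticePolytope P) (l : Fin d → ℤ) : ∃ k : ℕ, widthF P l = k := by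
  obtain ⟨a, b, ha, hb, hab⟩ := hP.exists_latticePoint_min_max (intFunctional l)
  have hle : l ⬝ᵥ a ≤ l ⬝ᵥ b := by
    have := (hab _ ha).2
    rwa [intFunctional_ratl, intFunctional_ratl, Int.cast_le] at this
  refine ⟨(l ⬝ᵥ b - l ⬝ᵥ a).toNat, ?_⟩
  rw [widthF_eq_sub ha hb hab, intFunctional_ratl, intFunctional_ratl, ← Int.cast_sub,
    ← Int.cast_natCast, Int.toNat_of_nonneg (sub_nonneg.2 hle)]

theorem latWidth_le_widthF (P : Set (Fin d → ℝ)) {l : Fin d → ℤ} (hl : l ≠ 0) :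
    latWidth P ≤ widthF P l :=
  csInf_le ⟨0, by rintro _ ⟨l', rfl⟩; exact widthF_nonneg P l'⟩ ⟨⟨l, hl⟩, rfl⟩

theorem latWidth_mono (hd : 0 < d) {P Q : Set (Fin d → ℝ)} (hPQ : P ⊆ Q) (hP : P.Nonempty)
    (hQ : IsCompact Q) : latWidth P ≤ latWidth Q := by
  have := nonempty_ne_zero hd
  refine le_csInf (range_nonempty _) ?_
  rintro _ ⟨⟨l, hl⟩, rfl⟩
  exact (latWidth_le_widthF P hl).trans (widthF_mono hPQ hP hQ l)

theorem IsLatticePolytope.exists_latWidth_eq_widthF (hd : 0 < d) {P : Set (Fin d → ℝ)}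
    (hP : IsLatticePolytope P) : ∃ l ≠ 0, latWidth P = widthF P l := by
  have := nonempty_ne_zero hd
  obtain ⟨⟨l, hl⟩, hmin⟩ := exists_isLeast_range_of_natCast
    (fun l : {l : Fin d → ℤ // l ≠ 0} => widthF P l) fun l => hP.exists_widthF_eq_natCast l
  exact ⟨l, hl, hmin.csInf_eq⟩

end Width

section Stacking

variable {d : ℕ}

theorem latticePoints_convexJoin_eq_insert {P : Set (Fin d → ℝ)} (hP : Convex ℝ P)
    (hne : P.Nonempty) {z : Fin d → ℤ} (hfin : (latticePoints (convexJoin ℝ {ratl z} P)).Finite)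
    (hmin : ∀ y ∈ latticePoints (convexJoin ℝ {ratl z} P), y ∉ latticePoints P →
      (latticePoints (convexJoin ℝ {ratl z} P)).ncard ≤
        (latticePoints (convexJoin ℝ {ratl y} P)).ncard) :
    latticePoints (convexJoin ℝ {ratl z} P) = insert z (latticePoints P) := by
  have hz : z ∈ latticePoints (convexJoin ℝ {ratl z} P) :=
    subset_convexJoin_left hne (mem_singleton _)
  refine subset_antisymm (fun y hy => ?_)
    (insert_subset hz (preimage_mono (subset_convexJoin_right (singleton_nonempty _))))
  by_contra hyz
  obtain ⟨hyz, hyP⟩ := not_or.1 hyz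
  have hsub : latticePoints (convexJoin ℝ {ratl y} P) ⊆ latticePoints (convexJoin ℝ {ratl z} P) :=
    preimage_mono (convexJoin_subset (singleton_subset_iff.2 hy)
      (subset_convexJoin_right (singleton_nonempty _)) (convex_singleton _ |>.convexJoin hP))
  have hzy : z ∉ latticePoints (convexJoin ℝ {ratl y} P) := fun hzy =>
    (hP.mem_or_eq_of_mem_convexJoin hy hzy).elim hyP fun h => hyz (ratl_injective h)
  exact (hmin y hy hyP).not_gt (ncard_lt_ncard (ssubset_of_subset_not_subset hsub
    fun h => hzy (h hz)) hfin)

theorem IsLatticePolytope.exists_intFunctional_eq_not_mem (hd : 2 ≤ d) {P : Set (Fin d → ℝ)}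
    (hP : IsLatticePolytope P) (l a : Fin d → ℤ) :
    ∃ z, ratl z ∉ P ∧ intFunctional l (ratl z) = intFunctional l (ratl a) := by
  have : Nontrivial (Fin d) := Fin.nontrivial_iff_two_le.2 hd
  obtain ⟨u, hu, hul⟩ := exists_ne_zero_dotProduct_eq_zero l
  have hinj : Function.Injective fun k : ℤ => a + k • u :=
    (add_right_injective a).comp (smul_left_injective ℤ hu)
  obtain ⟨k, hk⟩ := ((hP.finite_latticePoints.preimage hinj.injOn).infinite_compl).nonempty
  refine ⟨a + k • u, hk, ?_⟩
  rw [intFunctional_ratl, intFunctional_ratl, dotProduct_add, dotProduct_smul, dotProduct_comm l u,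
    hul, smul_zero, add_zero]

theorem IsLatticePolytope.exists_stack (hd : 2 ≤ d) {P : Set (Fin d → ℝ)}
    (hP : IsLatticePolytope P) : ∃ Q, IsLatticePolytope Q ∧ P ⊆ Q ∧
      latticeSize Q = latticeSize P + 1 ∧ latWidth Q = latWidth P := by
  obtain ⟨l, hl, hlW⟩ := hP.exists_latWidth_eq_widthF (by omega)
  set f := intFunctional l
  obtain ⟨a, b, ha, hb, hab⟩ := hP.exists_latticePoint_min_max f
  set slab := {x | f (ratl a) ≤ f x} ∩ {x | f x ≤ f (ratl b)}
  have hslab : Convex ℝ slab :=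
    (convex_halfSpace_ge f.isLinear _).inter (convex_halfSpace_le f.isLinear _)
  obtain ⟨z₀, hz₀P, hz₀⟩ := hP.exists_intFunctional_eq_not_mem hd l a
  -- stack onto `P` a lattice point of the slab whose join with `P` has fewest lattice points
  obtain ⟨z, ⟨hzslab, hzP⟩, hzmin⟩ :=
    (measure fun y => (latticePoints (convexJoin ℝ {ratl y} P)).ncard).wf.has_min
      {y | ratl y ∈ slab ∧ ratl y ∉ P} ⟨z₀, ⟨hz₀.ge, hz₀.trans_le (hab _ ha).2⟩, hz₀P⟩
  set Q := convexJoin ℝ {ratl z} P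
  have hQ : IsLatticePolytope Q := hP.convexJoin_singleton z
  have hPQ : P ⊆ Q := subset_convexJoin_right (singleton_nonempty _)
  have hQslab : Q ⊆ slab := convexJoin_subset (singleton_subset_iff.2 hzslab) hab hslab
  have hlatt : latticePoints Q = insert z (latticePoints P) :=
    latticePoints_convexJoin_eq_insert hP.convex hP.nonempty hQ.finite_latticePoints
      fun y hy hyP => not_lt.1 (hzmin y ⟨hQslab hy, hyP⟩)
  refine ⟨Q, hQ, hPQ, ?_, le_antisymm ?_ (latWidth_mono (by omega) hPQ hP.nonempty hQ.isCompact)⟩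
  · rw [latticeSize_eq_ncard, hlatt,
      ncard_insert_of_notMem (s := latticePoints P) hzP hP.finite_latticePoints]
    rfl
  · calc latWidth Q ≤ widthF Q l := latWidth_le_widthF Q hl
      _ = widthF P l := by
        rw [widthF_eq_sub (hPQ ha) (hPQ hb) hQslab, widthF_eq_sub ha hb hab]
      _ = latWidth P := hlW.symm

end Stacking

theorem IsLatticePolytope.exists_unimodEquiv_subset_Icc {d : ℕ} (hd : d ≤ 1)
    {P : Set (Fin d → ℝ)} (hP : IsLatticePolytope P) :
    ∃ P' ⊆ Icc (0 : Fin d → ℝ) (fun _ => (latticeSize P : ℝ)), UnimodEquiv P P' := by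
  obtain rfl | rfl : d = 0 ∨ d = 1 := by omega
  · exact ⟨P, fun x _ => ⟨fun i => i.elim0, fun i => i.elim0⟩, .refl P⟩
  obtain ⟨a, b, ha, hb, hab⟩ := hP.exists_latticePoint_min_max (LinearMap.proj 0)
  have hmem : ∀ k ∈ Icc (a 0) (b 0), (fun _ => k : Fin 1 → ℤ) ∈ latticePoints P := by
    rintro k ⟨hak, hkb⟩
    obtain ⟨x, hx, hxk⟩ := (hP.convex.linear_image (LinearMap.proj 0)).ordConnected.out
      (mem_image_of_mem _ ha) (mem_image_of_mem _ hb)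
      (show (k : ℝ) ∈ Icc (a 0 : ℝ) (b 0) from ⟨by exact_mod_cast hak, by exact_mod_cast hkb⟩)
    have hxk : ratl (fun _ => k) = x := funext fun i => Fin.fin_one_eq_zero i ▸ hxk.symm
    rwa [latticePoints, mem_preimage, hxk]
  have hcount : b 0 + 1 - a 0 ≤ latticeSize P := by
    refine (Int.self_le_toNat _).trans (Int.ofNat_le.2 ?_)
    have hinj : Function.Injective fun k : ℤ => (fun _ => k : Fin 1 → ℤ) :=
      fun k k' h => congrFun h 0
    rw [← Int.card_Icc, ← ncard_coe_finset, Finset.coe_Icc, ← ncard_image_of_injective _ hinj]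
    exact ncard_le_ncard (image_subset_iff.2 hmem) hP.finite_latticePoints
  refine ⟨affMap 1 (-a) '' P, ?_, 1, -a, by simp, rfl⟩
  rintro _ ⟨x, hx, rfl⟩
  have hx0 : (a 0 : ℝ) ≤ x 0 ∧ x 0 ≤ b 0 := hab x hx
  have hlen : (b 0 : ℝ) + 1 - a 0 ≤ latticeSize P := by exact_mod_cast hcount
  refine ⟨fun i => ?_, fun i => ?_⟩ <;> simp [Fin.fin_one_eq_zero i, affMap, ratl] <;> linarith

/-- Monotonicity of the finiteness threshold width in the size: an infinite family of
pairwise non-equivalent lattice d-polytopes of size n and width W yields one of size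
n+1 and width W. -/
theorem threshold_monotone_in_size (d n : ℕ) (W : ℝ)
    (h : ∃ S : Set (Set (Fin d → ℝ)), S.Infinite ∧
      (∀ P ∈ S, IsLatticePolytope P ∧ affineSpan ℝ P = ⊤ ∧
        latticeSize P = n ∧ latWidth P = W) ∧
      (∀ P ∈ S, ∀ P' ∈ S, P ≠ P' → ¬ UnimodEquiv P P')) :
    ∃ S : Set (Set (Fin d → ℝ)), S.Infinite ∧
      (∀ P ∈ S, IsLatticePolytope P ∧ affineSpan ℝ P = ⊤ ∧
        latticeSize P = n + 1 ∧ latWidth P = W) ∧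
      (∀ P ∈ S, ∀ P' ∈ S, P ≠ P' → ¬ UnimodEquiv P P') := by
  obtain ⟨S, hSinf, hS, hpair⟩ := h
  have hSpoly : ∀ P ∈ S, IsLatticePolytope P := fun P hP => (hS P hP).1
  rcases lt_or_ge d 2 with hd | hd
  · have hbox : (latticePoints (Icc (0 : Fin d → ℝ) fun _ => (n : ℝ))).Finite :=
      isCompact_Icc.finite_latticePoints
    refine absurd ((finite_of_pairwise_not_unimodEquiv hSpoly hpair hbox).subset
      fun P hP => ⟨hP, ?_⟩) hSinf
    simpa only [(hS P hP).2.2.1] using (hSpoly P hP).exists_unimodEquiv_subset_Icc (by omega)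
  choose! Q hQ hPQ hsize hwidth using fun P (hP : P ∈ S) => (hSpoly P hP).exists_stack hd
  obtain ⟨T, hTQ, hTinf, hTpair⟩ := hSinf.exists_pairwise_not_rel UnimodEquiv.equivalence Q
    fun P₀ hP₀ => (finite_of_pairwise_not_unimodEquiv hSpoly hpair
      (hQ P₀ hP₀).finite_latticePoints).subset
        fun P ⟨hP, hPP₀⟩ => ⟨hP, hPP₀.exists_subset_of_subset (hPQ P hP)⟩
  refine ⟨T, hTinf, fun Q' hQ' => ?_, hTpair⟩
  obtain ⟨P, hP, rfl⟩ := hTQ hQ'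
  obtain ⟨-, hspan, hn, hW⟩ := hS P hP
  exact ⟨hQ P hP, eq_top_iff.2 (hspan ▸ affineSpan_mono ℝ (hPQ P hP)),
    by rw [hsize P hP, hn], by rw [hwidth P hP, hW]⟩
end
end

section
/- Let \pi : \mathbb{R}^d \to \mathbb{R}^{d-1} forget the last coordinate, let Q \subset \mathbb{R}^{d-1} be a (d-1)-polytope and q an interior point of Q. Then there exists a constant c (depending only on Q and q) such that every d-polytope P \subset \mathbb{R}^d with \pi(P) = Q satisfies vol(P) \le c \cdot length(P \cap \pi^{-1}(q)). -/
open Set MeasureTheory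

noncomputable section

/-!
Since `q` is interior and `Q` is bounded, there is a fixed `a ∈ (0, 1]` such that every
`x ∈ Q` can be written as `q = a • x + (1 - a) • y` with `y ∈ Q`. If `P` is convex and lies
over `Q`, the homothety `t ↦ a t + (1 - a) s`, where `(y, s) ∈ P`, maps the vertical fiber of
`P` over `x` into the fiber over `q`; so every fiber has length at most `a⁻¹` times the fiber
over `q`, and Fubini gives `vol P ≤ a⁻¹ vol Q · length (fiber over q)`.
-/

open Pointwise

theorem Bornology.IsBounded.exists_forall_smul_add_smul_eq_of_mem_interior
    {E : Type*} [NormedAddCommGroup E] [NormedSpace ℝ E] {Q : Set E}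
    (hQ : Bornology.IsBounded Q) {q : E} (hq : q ∈ interior Q) :
    ∃ a : ℝ, 0 < a ∧ a ≤ 1 ∧ ∀ x ∈ Q, ∃ y ∈ Q, a • x + (1 - a) • y = q := by
  obtain ⟨ε, hε, hball⟩ := Metric.mem_nhds_iff.mp (mem_interior_iff_mem_nhds.mp hq)
  obtain ⟨R, hR⟩ := hQ.subset_closedBall q
  obtain ⟨δ, hδ, hδR⟩ := exists_pos_mul_lt hε R
  refine ⟨δ / (1 + δ), by positivity, div_le_one_of_le₀ (by linarith) (by positivity),
    fun x hx => ⟨q + δ • (q - x), hball ?_, ?_⟩⟩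
  · rw [Metric.mem_ball, dist_eq_norm, add_sub_cancel_left, norm_smul, Real.norm_of_nonneg hδ.le,
      ← dist_eq_norm, dist_comm]
    nlinarith [Metric.mem_closedBall.mp (hR hx)]
  · have h1 : (1 + δ) * (1 + δ)⁻¹ = 1 := mul_inv_cancel₀ (by positivity)
    rw [div_eq_mul_inv]
    linear_combination (norm := module) (δ * h1) • (x - q)

section VerticalFiber

variable {d : ℕ}

def verticalFiber (P : Set (Fin (d + 1) → ℝ)) (x : Fin d → ℝ) : Set ℝ :=
  {t | Fin.snoc x t ∈ P}

theorem volume_eq_lintegral_volume_verticalFiber {P : Set (Fin (d + 1) → ℝ)}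
    (hP : MeasurableSet P) : volume P = ∫⁻ x, volume (verticalFiber P x) := by
  let e := MeasurableEquiv.piFinSuccAbove (fun _ : Fin (d + 1) => ℝ) (Fin.last d)
  have he : ∀ x t, e.symm (t, x) = Fin.snoc x t := fun x t => by
    simp [e, MeasurableEquiv.piFinSuccAbove, Fin.insertNthEquiv, Fin.insertNth_last']
  rw [← ((volume_preserving_piFinSuccAbove _ (Fin.last d)).symm e).measure_preimage
    hP.nullMeasurableSet, Measure.volume_eq_prod, Measure.prod_apply_symm (e.symm.measurable hP)]
  simp only [verticalFiber, preimage_preimage, he]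
  rfl

theorem verticalFiber_eq_empty {P : Set (Fin (d + 1) → ℝ)} {x : Fin d → ℝ}
    (hx : x ∉ proj '' P) : verticalFiber P x = ∅ :=
  eq_empty_of_forall_notMem fun t ht => hx ⟨_, ht, Fin.init_snoc (α := fun _ => ℝ) t x⟩

theorem volume_verticalFiber_ne_top {P : Set (Fin (d + 1) → ℝ)} (hP : IsCompact P)
    (x : Fin d → ℝ) : volume (verticalFiber P x) ≠ ⊤ := by
  have hsub : verticalFiber P x ⊆ (· (Fin.last d)) '' P :=
    fun t ht => ⟨_, ht, Fin.snoc_last (α := fun _ => ℝ) t x⟩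
  exact ((measure_mono hsub).trans_lt (hP.image (continuous_apply _)).measure_lt_top).ne

theorem Fin.snoc_smul_add_smul (a b : ℝ) (x y : Fin d → ℝ) (t s : ℝ) :
    (Fin.snoc (a • x + b • y) (a * t + b * s) : Fin (d + 1) → ℝ) =
      a • Fin.snoc x t + b • Fin.snoc y s := by
  ext i
  induction i using Fin.lastCases <;> simp

theorem ofReal_mul_volume_verticalFiber_le {P : Set (Fin (d + 1) → ℝ)} (hP : Convex ℝ P)
    {a : ℝ} (ha₀ : 0 ≤ a) (ha₁ : a ≤ 1) (x : Fin d → ℝ) {y : Fin d → ℝ} (hy : y ∈ proj '' P) :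
    ENNReal.ofReal a * volume (verticalFiber P x) ≤
      volume (verticalFiber P (a • x + (1 - a) • y)) := by
  obtain ⟨p, hp, rfl⟩ := hy
  let s := p (Fin.last d)
  have hmaps : (fun t => (1 - a) * s + a * t) '' verticalFiber P x ⊆
      verticalFiber P (a • x + (1 - a) • proj p) := by
    rintro _ ⟨t, ht, rfl⟩
    have hps : Fin.snoc (proj p) s = p := Fin.snoc_init_self p
    change Fin.snoc (a • x + (1 - a) • proj p) ((1 - a) * s + a * t) ∈ P
    rw [add_comm ((1 - a) * s), Fin.snoc_smul_add_smul, hps]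
    exact hP ht hp ha₀ (by linarith) (by ring)
  have himage : (fun t => (1 - a) * s + a * t) '' verticalFiber P x =
      ((1 - a) * s) +ᵥ a • verticalFiber P x := by
    rw [← image_smul, ← image_vadd, image_image]
    rfl
  calc ENNReal.ofReal a * volume (verticalFiber P x)
      = volume ((fun t => (1 - a) * s + a * t) '' verticalFiber P x) := by
        rw [himage, measure_vadd, Measure.addHaar_smul, Module.finrank_self, pow_one,
          abs_of_nonneg ha₀]
    _ ≤ _ := measure_mono hmaps

theorem volume_le_mul_volume_of_volume_verticalFiber_le {P : Set (Fin (d + 1) → ℝ)}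
    {Q : Set (Fin d → ℝ)} (hP : MeasurableSet P) (hQ : MeasurableSet Q) (hPQ : proj '' P ⊆ Q)
    {C : ENNReal} (hC : ∀ x ∈ Q, volume (verticalFiber P x) ≤ C) : volume P ≤ C * volume Q := by
  have hle : ∀ x, volume (verticalFiber P x) ≤ Q.indicator (fun _ => C) x := fun x => by
    by_cases hx : x ∈ Q
    · simpa [indicator_of_mem hx] using hC x hx
    · simp [verticalFiber_eq_empty (fun h => hx (hPQ h))]
  calc volume P = ∫⁻ x, volume (verticalFiber P x) := volume_eq_lintegral_volume_verticalFiber hP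
    _ ≤ ∫⁻ x, Q.indicator (fun _ => C) x := lintegral_mono hle
    _ = C * volume Q := by rw [lintegral_indicator hQ, setLIntegral_const]

end VerticalFiber

theorem volume_bounded_by_fiber_length_general (d : ℕ) (Q : Set (Fin d → ℝ))
    (hQ : ∃ V : Finset (Fin d → ℝ), Q = convexHull ℝ ↑V)
    (q : Fin d → ℝ) (hq : q ∈ interior Q) :
    ∃ c : ℝ, ∀ P : Set (Fin (d+1) → ℝ),
      (∃ V : Finset (Fin (d+1) → ℝ), P = convexHull ℝ ↑V) →
      affineSpan ℝ P = ⊤ →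
      proj '' P = Q →
      (volume P).toReal ≤ c * (volume {t : ℝ | Fin.snoc q t ∈ P}).toReal := by
  have hQc : IsCompact Q := by
    obtain ⟨V, rfl⟩ := hQ
    exact V.finite_toSet.isCompact_convexHull (𝕜 := ℝ)
  obtain ⟨a, ha₀, ha₁, hsplit⟩ := hQc.isBounded.exists_forall_smul_add_smul_eq_of_mem_interior hq
  refine ⟨a⁻¹ * (volume Q).toReal, fun P ⟨V, hV⟩ _ hproj => ?_⟩
  have hPc : IsCompact P := hV ▸ V.finite_toSet.isCompact_convexHull (𝕜 := ℝ)
  have hPconv : Convex ℝ P := hV ▸ convex_convexHull ℝ _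
  have hfiber : ∀ x ∈ Q,
      volume (verticalFiber P x) ≤ (ENNReal.ofReal a)⁻¹ * volume (verticalFiber P q) := by
    intro x hx
    obtain ⟨y, hy, rfl⟩ := hsplit x hx
    rw [← ENNReal.mul_le_iff_le_inv (by simpa using ha₀) ENNReal.ofReal_ne_top]
    exact ofReal_mul_volume_verticalFiber_le hPconv ha₀.le ha₁ x (hproj ▸ hy)
  have hbound := volume_le_mul_volume_of_volume_verticalFiber_le hPc.isClosed.measurableSet
    hQc.isClosed.measurableSet hproj.subset hfiber
  calc (volume P).toReal
      ≤ ((ENNReal.ofReal a)⁻¹ * volume (verticalFiber P q) * volume Q).toReal :=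
        ENNReal.toReal_mono (ENNReal.mul_ne_top (ENNReal.mul_ne_top (by simpa using ha₀)
          (volume_verticalFiber_ne_top hPc q)) hQc.measure_lt_top.ne) hbound
    _ = a⁻¹ * (volume Q).toReal * (volume (verticalFiber P q)).toReal := by
        rw [ENNReal.toReal_mul, ENNReal.toReal_mul, ENNReal.toReal_inv,
          ENNReal.toReal_ofReal ha₀.le]
        ring

/-- Volume of a polytope projecting onto Q is bounded by a constant times the length
of the fiber over a fixed interior point q of Q. -/
theorem volume_bounded_by_fiber_length (d : ℕ) (Q : Set (Fin d → ℝ))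
    (hQ : ∃ V : Finset (Fin d → ℝ), Q = convexHull ℝ ↑V)
    (hQfull : affineSpan ℝ Q = ⊤) (q : Fin d → ℝ) (hq : q ∈ interior Q) :
    ∃ c : ℝ, ∀ P : Set (Fin (d+1) → ℝ),
      (∃ V : Finset (Fin (d+1) → ℝ), P = convexHull ℝ ↑V) →
      affineSpan ℝ P = ⊤ →
      proj '' P = Q →
      (volume P).toReal ≤ c * (volume {t : ℝ | Fin.snoc q t ∈ P}).toReal :=
  volume_bounded_by_fiber_length_general d Q hQ q hq
end
end

section
/- The hollow 3-polytope Q = conv{(0,0,0),(1,0,0),(0,1,0),(0,0,1),(2,2,3)} has lattice width exactly 2. -/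
open Set MeasureTheory

noncomputable section

/-- The hollow 3-polytope projecting from the Haase–Ziegler family. -/
def QHZ : Set (Fin 3 → ℝ) :=
  convexHull ℝ {![0,0,0], ![1,0,0], ![0,1,0], ![0,0,1], ![(2:ℝ),2,3]}


/-! The functional `(1, 1, -1)` takes only the values `-1, 0, 1` on the vertices of `Q`, so `Q` has
width at most `2`. Conversely, if some nonzero integer functional `(a, b, c)` had width less than `2`
on `Q`, its values `0, a, b, c, 2a + 2b + 3c` at the vertices would be integers pairwise at
distance at most `1`, so `a, b, c` all lie in `{0, 1}` or all lie in `{-1, 0}`; but then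
`|2a + 2b + 3c| ≤ 1` forces `a = b = c = 0`. -/

open Matrix

section Width

variable {d : ℕ}

lemma widthF_eq_sSup_abs_dotProduct_sub (P : Set (Fin d → ℝ)) (l : Fin d → ℤ) :
    widthF P l =
      sSup ((fun pq : (Fin d → ℝ) × (Fin d → ℝ) => |ratl l ⬝ᵥ pq.1 - ratl l ⬝ᵥ pq.2|) '' (P ×ˢ P)) := by
  simp only [← dotProduct_sub]
  rfl

lemma ratl_dotProduct_ratl (l x : Fin d → ℤ) : ratl l ⬝ᵥ ratl x = ((l ⬝ᵥ x : ℤ) : ℝ) := by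
  simp [dotProduct, ratl]

lemma abs_dotProduct_sub_le_widthF {P : Set (Fin d → ℝ)} (hP : IsCompact P) (l : Fin d → ℤ)
    {p q : Fin d → ℝ} (hp : p ∈ P) (hq : q ∈ P) :
    |ratl l ⬝ᵥ p - ratl l ⬝ᵥ q| ≤ widthF P l := by
  rw [widthF_eq_sSup_abs_dotProduct_sub]
  exact le_csSup ((hP.prod hP).image (by fun_prop)).bddAbove ⟨(p, q), ⟨hp, hq⟩, rfl⟩

lemma intCast_abs_dotProduct_sub_le_widthF {P : Set (Fin d → ℝ)} (hP : IsCompact P)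
    (l : Fin d → ℤ) {x y : Fin d → ℤ} (hx : ratl x ∈ P) (hy : ratl y ∈ P) :
    ((|l ⬝ᵥ (x - y)| : ℤ) : ℝ) ≤ widthF P l := by
  simpa [dotProduct_sub, ratl_dotProduct_ratl] using abs_dotProduct_sub_le_widthF hP l hx hy

lemma widthF_convexHull_le {s : Set (Fin d → ℝ)} {l : Fin d → ℤ} {m c : ℝ} (hc : 0 ≤ c)
    (hs : ∀ v ∈ s, m ≤ ratl l ⬝ᵥ v ∧ ratl l ⬝ᵥ v ≤ m + c) :
    widthF (convexHull ℝ s) l ≤ c := by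
  have hlin : IsLinearMap ℝ (ratl l ⬝ᵥ ·) := ⟨dotProduct_add _, fun a v => dotProduct_smul a _ v⟩
  have hslab : convexHull ℝ s ⊆ {x | m ≤ ratl l ⬝ᵥ x} ∩ {x | ratl l ⬝ᵥ x ≤ m + c} :=
    convexHull_min hs ((convex_halfSpace_ge hlin m).inter (convex_halfSpace_le hlin (m + c)))
  rw [widthF_eq_sSup_abs_dotProduct_sub]
  refine Real.sSup_le ?_ hc
  rintro _ ⟨⟨p, q⟩, ⟨hp, hq⟩, rfl⟩
  obtain ⟨hp₁, hp₂⟩ : m ≤ ratl l ⬝ᵥ p ∧ ratl l ⬝ᵥ p ≤ m + c := hslab hp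
  obtain ⟨hq₁, hq₂⟩ : m ≤ ratl l ⬝ᵥ q ∧ ratl l ⬝ᵥ q ≤ m + c := hslab hq
  exact abs_le.mpr ⟨by linarith, by linarith⟩

end Width

section QHZ

def QHZVertices : Finset (Fin 3 → ℤ) := {![0, 0, 0], ![1, 0, 0], ![0, 1, 0], ![0, 0, 1], ![2, 2, 3]}

lemma ratl_vecCons (a b c : ℤ) : ratl ![a, b, c] = ![(a : ℝ), b, c] := by
  funext i
  fin_cases i <;> rfl

lemma QHZ_eq_convexHull_ratl_image : QHZ = convexHull ℝ (ratl '' QHZVertices) := by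
  simp [QHZ, QHZVertices, Set.image_insert_eq, ratl_vecCons]

lemma isCompact_QHZ : IsCompact QHZ := by
  rw [QHZ_eq_convexHull_ratl_image]
  exact (QHZVertices.finite_toSet.image _).isCompact_convexHull ℝ

lemma ratl_mem_QHZ {x : Fin 3 → ℤ} (hx : x ∈ QHZVertices) : ratl x ∈ QHZ := by
  rw [QHZ_eq_convexHull_ratl_image]
  exact subset_convexHull ℝ _ (Set.mem_image_of_mem _ hx)

lemma two_le_widthF_QHZ {l : Fin 3 → ℤ} (hl : l ≠ 0) : 2 ≤ widthF QHZ l := by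
  by_contra! hlt
  have hV : ∀ x ∈ QHZVertices, ∀ y ∈ QHZVertices, |l ⬝ᵥ (x - y)| < 2 := fun x hx y hy => by
    exact_mod_cast (intCast_abs_dotProduct_sub_le_widthF isCompact_QHZ l
      (ratl_mem_QHZ hx) (ratl_mem_QHZ hy)).trans_lt hlt
  simp [QHZVertices, dotProduct, Fin.sum_univ_three, abs_le] at hV
  have hl0 : l 0 = 0 ∧ l 1 = 0 ∧ l 2 = 0 := by omega
  exact hl (funext fun i => by fin_cases i <;> simp [hl0])

lemma widthF_QHZ_le_two : widthF QHZ ![1, 1, -1] ≤ 2 := by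
  refine widthF_convexHull_le (m := -1) zero_le_two ?_
  simp [ratl_vecCons, dotProduct, Fin.sum_univ_three]
  norm_num

end QHZ

/-- Q = conv{0, e₁, e₂, e₃, (2,2,3)} has lattice width exactly 2. -/
theorem QHZ_width_two : latWidth QHZ = 2 := by
  have hl₀ : (![1, 1, -1] : Fin 3 → ℤ) ≠ 0 := fun h => by simpa using congrFun h 0
  refine IsLeast.csInf_eq ⟨⟨⟨_, hl₀⟩, le_antisymm widthF_QHZ_le_two (two_le_widthF_QHZ hl₀)⟩, ?_⟩
  rintro _ ⟨l, rfl⟩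
  exact two_le_widthF_QHZ l.2
end
end
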